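/- (Correctness of eliminating unnecessary rules.) Let P be a term rewriting system, t a term, and ρ = (l → r) a rule of P whose defined symbol (the root symbol of l) neither occurs in t nor is reachable in the needs graph of P by a directed path from a vertex representing a symbol occurring in t. Then ρ is never applicable in any rewrite sequence starting from t: for all terms s, u with t →*_P s, no subterm of s is an instance of l. Consequently the sets of reducts of t under P and under P \ {ρ} coincide, and t has the same normal forms with respect to P and with respect to P \ {ρ}. -/

import Mathlib

/-- First-order terms over a signature `σ` (function symbols and constants,
where constants are symbols applied to the empty argument list) and
variables `ν`. -/
inductive Term (σ ν : Type) : Type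
  | var : ν → Term σ ν
  | app : σ → List (Term σ ν) → Term σ ν

namespace Term

variable {σ ν : Type}

/-- Applying a substitution to a term. -/
def subst (θ : ν → Term σ ν) : Term σ ν → Term σ ν
  | .var v => θ v
  | .app f ts => .app f (ts.attach.map fun x => subst θ x.1)
  decreasing_by have := List.sizeOf_lt_of_mem x.2; simp at this ⊢; omega

/-- The set of function symbols and constants occurring in a term. -/
def symbols : Term σ ν → Set σ
  | .var _ => ∅
  | .app f ts => {f} ∪ (ts.attach.map fun x => symbols x.1).foldr (· ∪ ·) ∅
  decreasing_by have := List.sizeOf_lt_of_mem x.2; simp at this ⊢; omega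

/-- The set of variables occurring in a term. -/
def vars : Term σ ν → Set ν
  | .var v => {v}
  | .app _ ts => (ts.attach.map fun x => vars x.1).foldr (· ∪ ·) ∅
  decreasing_by have := List.sizeOf_lt_of_mem x.2; simp at this ⊢; omega

/-- The outermost (root) symbol of a term, if any. -/
def root : Term σ ν → Option σ
  | .var _ => none
  | .app f _ => some f

/-- `u.IsSubtermOf t` holds when `u` is a (not necessarily proper) subterm of `t`. -/
inductive IsSubtermOf : Term σ ν → Term σ ν → Prop
  | refl (t : Term σ ν) : IsSubtermOf t t
  | arg {u t : Term σ ν} {f : σ} {ts : List (Term σ ν)} :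
      t ∈ ts → IsSubtermOf u t → IsSubtermOf u (.app f ts)

end Term

/-- A rewrite rule `l → r`: `l` is not a variable and every variable of `r`
occurs in `l`. -/
structure Rule (σ ν : Type) where
  lhs : Term σ ν
  rhs : Term σ ν
  lhs_not_var : ∀ v, lhs ≠ .var v
  vars_subset : rhs.vars ⊆ lhs.vars

/-- A term rewriting system: a finite set (list) of rules. -/
structure TRS (σ ν : Type) where
  rules : List (Rule σ ν)

namespace TRS

variable {σ ν : Type}

/-- The one-step rewrite relation of `P`: replace an instance `lσ` of a
left-hand side, occurring as a subterm, by the corresponding instance `rσ`. -/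
inductive Rewrite (P : TRS σ ν) : Term σ ν → Term σ ν → Prop
  | root {ρ : Rule σ ν} (hρ : ρ ∈ P.rules) (θ : ν → Term σ ν) :
      Rewrite P (ρ.lhs.subst θ) (ρ.rhs.subst θ)
  | congr {s t : Term σ ν} (f : σ) (pre post : List (Term σ ν)) :
      Rewrite P s t →
      Rewrite P (.app f (pre ++ s :: post)) (.app f (pre ++ t :: post))

/-- A symbol is defined if it is the outermost symbol of the left-hand side
of some rule. -/
def Defined (P : TRS σ ν) (f : σ) : Prop :=
  ∃ ρ ∈ P.rules, ρ.lhs.root = some f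

/-- Edge `f ⟶ g` of the needs graph: `f` is the root (defined) symbol of the
left-hand side of some rule whose right-hand side contains `g`. -/
def NeedsEdge (P : TRS σ ν) (f g : σ) : Prop :=
  ∃ ρ ∈ P.rules, ρ.lhs.root = some f ∧ g ∈ ρ.rhs.symbols

/-- A term is in normal form if no subterm of it is an instance of the
left-hand side of a rule of `P`. -/
def NormalForm (P : TRS σ ν) (s : Term σ ν) : Prop :=
  ∀ u : Term σ ν, u.IsSubtermOf s → ∀ ρ ∈ P.rules, ∀ θ : ν → Term σ ν, u ≠ ρ.lhs.subst θ

end TRS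

/-! A rewrite step contracting `lθ` to `rθ` introduces only symbols of `r`, and each of them is
needed by the root symbol of `l`, which occurs in `lθ`. So every set of symbols that contains those
of `t` and is closed under the needs graph contains the symbols of every reduct of `t`. Applying
this to the symbols reachable from `t`, the root symbol of `ρ` never occurs in a reduct, so `ρ`
never applies, and removing it changes neither the reducts of `t` nor their normal forms. -/

theorem Set.mem_foldr_union {α : Type*} {x : α} {L : List (Set α)} :
    x ∈ L.foldr (· ∪ ·) ∅ ↔ ∃ s ∈ L, x ∈ s := by
  induction L with
  | nil => simp
  | cons s L ih => simp [ih]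

namespace Term

variable {σ ν : Type}

theorem mem_symbols_app {g f : σ} {ts : List (Term σ ν)} :
    g ∈ (app f ts).symbols ↔ g = f ∨ ∃ u ∈ ts, g ∈ u.symbols := by
  rw [symbols]
  simp [Set.mem_foldr_union]

theorem mem_vars_app {v : ν} {f : σ} {ts : List (Term σ ν)} :
    v ∈ (app f ts).vars ↔ ∃ u ∈ ts, v ∈ u.vars := by
  rw [vars]
  simp [Set.mem_foldr_union]

theorem subst_app {θ : ν → Term σ ν} {f : σ} {ts : List (Term σ ν)} :
    (app f ts).subst θ = app f (ts.map (subst θ)) := by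
  rw [subst]
  simp

theorem symbols_app_append_cons {f : σ} {pre post : List (Term σ ν)} {s : Term σ ν} :
    (app f (pre ++ s :: post)).symbols = (app f (pre ++ post)).symbols ∪ s.symbols := by
  ext g
  simp only [mem_symbols_app, List.mem_append, List.mem_cons, Set.mem_union]
  grind

theorem mem_symbols_subst {θ : ν → Term σ ν} {g : σ} :
    ∀ t : Term σ ν,
      g ∈ (t.subst θ).symbols ↔ g ∈ t.symbols ∨ ∃ v ∈ t.vars, g ∈ (θ v).symbols
  | .var v => by simp [subst, symbols, vars]
  | .app f ts => by
    simp only [subst_app, mem_symbols_app, List.mem_map, mem_vars_app]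
    constructor
    · rintro (rfl | ⟨_, ⟨u, hu, rfl⟩, hg⟩)
      · exact .inl (.inl rfl)
      · rcases (mem_symbols_subst u).1 hg with hg | ⟨v, hv, hg⟩
        · exact .inl (.inr ⟨u, hu, hg⟩)
        · exact .inr ⟨v, ⟨u, hu, hv⟩, hg⟩
    · rintro ((rfl | ⟨u, hu, hg⟩) | ⟨v, ⟨u, hu, hv⟩, hg⟩)
      · exact .inl rfl
      · exact .inr ⟨_, ⟨u, hu, rfl⟩, (mem_symbols_subst u).2 (.inl hg)⟩
      · exact .inr ⟨_, ⟨u, hu, rfl⟩, (mem_symbols_subst u).2 (.inr ⟨v, hv, hg⟩)⟩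
  termination_by t => sizeOf t
  decreasing_by all_goals (have := List.sizeOf_lt_of_mem hu; simp at this ⊢; omega)

theorem mem_symbols_of_root_eq {t : Term σ ν} {f : σ} (h : t.root = some f) :
    f ∈ t.symbols := by
  cases t with
  | var v => cases h
  | app g ts => cases h; exact mem_symbols_app.2 (.inl rfl)

theorem mem_symbols_subst_of_root_eq {t : Term σ ν} {θ : ν → Term σ ν} {f : σ}
    (h : t.root = some f) : f ∈ (t.subst θ).symbols :=
  (mem_symbols_subst t).2 (.inl (mem_symbols_of_root_eq h))

theorem IsSubtermOf.symbols_subset {u s : Term σ ν} (h : u.IsSubtermOf s) :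
    u.symbols ⊆ s.symbols := by
  induction h with
  | refl => exact subset_rfl
  | arg hmem _ ih => exact fun g hg => mem_symbols_app.2 (.inr ⟨_, hmem, ih hg⟩)

end Term

def Rule.AppliesTo {σ ν : Type} (ρ : Rule σ ν) (s : Term σ ν) : Prop :=
  ∃ θ : ν → Term σ ν, (ρ.lhs.subst θ).IsSubtermOf s

theorem Rule.exists_lhs_root_eq {σ ν : Type} (ρ : Rule σ ν) : ∃ f, ρ.lhs.root = some f := by
  cases hl : ρ.lhs with
  | var v => exact absurd hl (ρ.lhs_not_var v)
  | app f _ => exact ⟨f, rfl⟩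

theorem Rule.not_appliesTo_of_root_eq {σ ν : Type} {ρ : Rule σ ν} {s : Term σ ν} {f : σ}
    (hf : ρ.lhs.root = some f) (hs : f ∉ s.symbols) : ¬ ρ.AppliesTo s := by
  rintro ⟨θ, hsub⟩
  exact hs (hsub.symbols_subset (Term.mem_symbols_subst_of_root_eq hf))

namespace TRS

open Relation

variable {σ ν : Type} {P P' : TRS σ ν} {s s' t : Term σ ν}

def IsNeedsClosed (P : TRS σ ν) (C : Set σ) : Prop :=
  ∀ ⦃a b⦄, a ∈ C → P.NeedsEdge a b → b ∈ C

theorem isNeedsClosed_setOf_reflTransGen (S : Set σ) :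
    P.IsNeedsClosed {g | ∃ a ∈ S, ReflTransGen P.NeedsEdge a g} :=
  fun _ _ ⟨a, ha, hab⟩ hedge => ⟨a, ha, hab.tail hedge⟩

theorem Rewrite.symbols_subset {C : Set σ} (hC : P.IsNeedsClosed C) (h : P.Rewrite s s')
    (hs : s.symbols ⊆ C) : s'.symbols ⊆ C := by
  induction h with
  | @root ρ hρ θ =>
    intro g hg
    rcases (Term.mem_symbols_subst _).1 hg with hg | ⟨v, hv, hg⟩
    · obtain ⟨f, hf⟩ := ρ.exists_lhs_root_eq
      exact hC (hs (Term.mem_symbols_subst_of_root_eq hf)) ⟨ρ, hρ, hf, hg⟩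
    · exact hs ((Term.mem_symbols_subst _).2 (.inr ⟨v, ρ.vars_subset hv, hg⟩))
  | congr f pre post _ ih =>
    rw [Term.symbols_app_append_cons] at hs ⊢
    exact Set.union_subset (Set.subset_union_left.trans hs)
      (ih (Set.subset_union_right.trans hs))

theorem symbols_subset_of_reflTransGen {C : Set σ} (hC : P.IsNeedsClosed C)
    (h : ReflTransGen P.Rewrite t s) (ht : t.symbols ⊆ C) : s.symbols ⊆ C := by
  induction h with
  | refl => exact ht
  | tail _ hstep ih => exact hstep.symbols_subset hC ih

theorem Rewrite.of_appliesTo_imp_mem (h : P.Rewrite s s')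
    (hP : ∀ r ∈ P.rules, r.AppliesTo s → r ∈ P'.rules) : P'.Rewrite s s' := by
  induction h with
  | root hρ θ => exact .root (hP _ hρ ⟨θ, .refl _⟩) θ
  | congr f pre post _ ih =>
    exact .congr f pre post
      (ih fun r hr ⟨θ, hsub⟩ => hP r hr ⟨θ, .arg (by simp) hsub⟩)

theorem Rewrite.mono (hsub : P'.rules ⊆ P.rules) (h : P'.Rewrite s s') : P.Rewrite s s' :=
  h.of_appliesTo_imp_mem fun _ hr _ => hsub hr

theorem normalForm_iff : P.NormalForm s ↔ ∀ r ∈ P.rules, ¬ r.AppliesTo s := by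
  simp only [NormalForm, Rule.AppliesTo, not_exists]
  exact ⟨fun h r hr θ hsub => h _ hsub r hr θ rfl,
    fun h u hu r hr θ heq => h r hr θ (heq ▸ hu)⟩

variable {ρ : Rule σ ν}

theorem reflTransGen_rewrite_iff_of_erase
    (hP' : ∀ r : Rule σ ν, r ∈ P'.rules ↔ r ∈ P.rules ∧ r ≠ ρ)
    (hρ : ∀ s, ReflTransGen P.Rewrite t s → ¬ ρ.AppliesTo s) :
    ReflTransGen P.Rewrite t s ↔ ReflTransGen P'.Rewrite t s := by
  have hsub : P'.rules ⊆ P.rules := fun r hr => ((hP' r).1 hr).1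
  refine ⟨fun h => ?_, ReflTransGen.mono (fun _ _ => Rewrite.mono hsub) _ _⟩
  induction h with
  | refl => exact .refl
  | tail hts hstep ih =>
    refine ih.tail (hstep.of_appliesTo_imp_mem fun r hr happ => (hP' r).2 ⟨hr, ?_⟩)
    rintro rfl
    exact hρ _ hts happ

theorem normalForm_iff_of_erase
    (hP' : ∀ r : Rule σ ν, r ∈ P'.rules ↔ r ∈ P.rules ∧ r ≠ ρ)
    (hρ : ¬ ρ.AppliesTo s) : P.NormalForm s ↔ P'.NormalForm s := by
  simp only [normalForm_iff, hP', and_imp]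
  refine ⟨fun h r hr _ => h r hr, fun h r hr => ?_⟩
  by_cases hrρ : r = ρ
  · exact hrρ ▸ hρ
  · exact h r hr hrρ

end TRS

theorem unnecessary_rule_elimination_general {σ ν : Type} (P P' : TRS σ ν)
    (t : Term σ ν) (ρ : Rule σ ν) (f : σ)
    (hf : ρ.lhs.root = some f)
    (hnotocc : f ∉ t.symbols)
    (hnotreach : ¬ ∃ a ∈ t.symbols, Relation.TransGen P.NeedsEdge a f)
    (hP' : ∀ r : Rule σ ν, r ∈ P'.rules ↔ r ∈ P.rules ∧ r ≠ ρ) :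
    (∀ s : Term σ ν, Relation.ReflTransGen P.Rewrite t s →
        ∀ u : Term σ ν, u.IsSubtermOf s → ∀ θ : ν → Term σ ν, u ≠ ρ.lhs.subst θ) ∧
    (∀ s : Term σ ν,
        Relation.ReflTransGen P.Rewrite t s ↔ Relation.ReflTransGen P'.Rewrite t s) ∧
    (∀ s : Term σ ν,
        (Relation.ReflTransGen P.Rewrite t s ∧ P.NormalForm s) ↔
          (Relation.ReflTransGen P'.Rewrite t s ∧ P'.NormalForm s)) := by
  have hf_unreachable : f ∉ {g | ∃ a ∈ t.symbols, Relation.ReflTransGen P.NeedsEdge a g} := by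
    rintro ⟨a, ha, haf⟩
    rcases Relation.reflTransGen_iff_eq_or_transGen.1 haf with rfl | haf
    · exact hnotocc ha
    · exact hnotreach ⟨a, ha, haf⟩
  have hnot_applies : ∀ s, Relation.ReflTransGen P.Rewrite t s → ¬ ρ.AppliesTo s :=
    fun s hs => Rule.not_appliesTo_of_root_eq hf fun hfs => hf_unreachable <|
      TRS.symbols_subset_of_reflTransGen (TRS.isNeedsClosed_setOf_reflTransGen _) hs
        (fun a ha => ⟨a, ha, .refl⟩) hfs
  have hreducts := fun s => TRS.reflTransGen_rewrite_iff_of_erase (s := s) hP' hnot_applies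
  refine ⟨fun s hs u hu θ heq => hnot_applies s hs ⟨θ, heq ▸ hu⟩, hreducts, fun s => ?_⟩
  exact (and_congr_right fun hs => TRS.normalForm_iff_of_erase hP' (hnot_applies s hs)).trans
    (and_congr_left' (hreducts s))

/-- A rule `ρ` whose defined symbol `f` neither occurs in `t`
nor is reachable in the needs graph of `P` from any symbol of `t` is never
applicable in any rewrite sequence starting from `t`; consequently the reducts
of `t` under `P` and under `P \\ {ρ}` coincide, and `t` has the same normal
forms with respect to both systems. -/
theorem unnecessary_rule_elimination {σ ν : Type} (P P' : TRS σ ν)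
    (t : Term σ ν) (ρ : Rule σ ν) (hρ : ρ ∈ P.rules) (f : σ)
    (hf : ρ.lhs.root = some f)
    (hnotocc : f ∉ t.symbols)
    (hnotreach : ¬ ∃ a ∈ t.symbols, Relation.TransGen P.NeedsEdge a f)
    (hP' : ∀ r : Rule σ ν, r ∈ P'.rules ↔ r ∈ P.rules ∧ r ≠ ρ) :
    (∀ s : Term σ ν, Relation.ReflTransGen P.Rewrite t s →
        ∀ u : Term σ ν, u.IsSubtermOf s → ∀ θ : ν → Term σ ν, u ≠ ρ.lhs.subst θ) ∧
    (∀ s : Term σ ν,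
        Relation.ReflTransGen P.Rewrite t s ↔ Relation.ReflTransGen P'.Rewrite t s) ∧
    (∀ s : Term σ ν,
        (Relation.ReflTransGen P.Rewrite t s ∧ P.NormalForm s) ↔
          (Relation.ReflTransGen P'.Rewrite t s ∧ P'.NormalForm s)) :=
  unnecessary_rule_elimination_general P P' t ρ f hf hnotocc hnotreach hP'
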